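/- In the change-point model below, for 0 ≤ l < n, ν-almost everywhere ν(θ ≤ n − l − 1 | 𝓕_n) = Π_{n−l−1} · L_{l+1}(X_{n−l−1}, …, X_n) / G_{l+1}(X_{n−l−1}, …, X_n, Π_{n−l−1}), where Π_m := ν(θ ≤ m | 𝓕_m). -/

import Mathlib

open MeasureTheory Finset
open scoped NNReal ENNReal

noncomputable section

/-- `L_m(x_k, …, x_N) = ∏_{r=k+1}^{N-m} f⁰(x_{r-1}, x_r) · ∏_{r=N-m+1}^{N} f¹(x_{r-1}, x_r)`. -/
def Lfn {E : Type*} (f0 f1 : E → E → ℝ≥0) (k N m : ℕ) (xv : ℕ → E) : ℝ≥0 :=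
  (∏ r ∈ Finset.Icc (k + 1) (N - m), f0 (xv (r - 1)) (xv r)) *
    ∏ r ∈ Finset.Icc (N - m + 1) N, f1 (xv (r - 1)) (xv r)

/-- Density `ℓ_j(x₀,…,x_n)` of the observations given the change point `θ = j`:
`ℓ_j = L_{n-j+1}` if `1 ≤ j ≤ n`, `ℓ₀ = L_n`, `ℓ_j = L₀` for `j > n`. -/
def ellDens {E : Type*} (f0 f1 : E → E → ℝ≥0) (n j : ℕ) (xv : ℕ → E) : ℝ≥0 :=
  if j = 0 then Lfn f0 f1 0 n n xv
  else if j ≤ n then Lfn f0 f1 0 n (n - j + 1) xv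
  else Lfn f0 f1 0 n 0 xv

/-- Extension of the observations `(x₁, …, x_n)` to a full trajectory `(x₀, x₁, …, x_n)`
with `x₀ = x` (entries beyond `n` are irrelevant and set to `x`). -/
def extvec {E : Type*} (n : ℕ) (x : E) (xs : Fin n → E) : ℕ → E := fun r =>
  if h : 1 ≤ r ∧ r ≤ n then xs ⟨r - 1, by omega⟩ else x

/-- The prior distribution of the change point: `ρ 0 = π`, `ρ j = (1-π) p^(j-1) (1-p)`, `j ≥ 1`. -/
def prior (p π : ℝ) (j : ℕ) : ℝ≥0∞ :=
  if j = 0 then ENNReal.ofReal π else ENNReal.ofReal ((1 - π) * p ^ (j - 1) * (1 - p))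

/-- The joint law `ν` of `(θ, X₁, …, X_n)` given `X₀ = x`: its restriction to `{j} × Eⁿ` is
`ρ j` times the measure with density `(x₁,…,x_n) ↦ ℓ_j(x, x₁, …, x_n)` w.r.t. `μ^⊗n`. -/
def nuMeasure {E : Type*} [MeasurableSpace E] (μ : Measure E) (f0 f1 : E → E → ℝ≥0)
    (p π : ℝ) (x : E) (n : ℕ) : Measure (ℕ × (Fin n → E)) :=
  Measure.sum fun j =>
    prior p π j •
      Measure.map (fun xs => (j, xs))
        ((Measure.pi fun _ : Fin n => μ).withDensity fun xs =>
          (ellDens f0 f1 n j (extvec n x xs) : ℝ≥0∞))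

/-- `S(x₀, …, x_m) = π L_m + (1-π)(∑_{i=1}^m p^{i-1} q L_{m-i+1} + p^m L₀)`. -/
def Sfn {E : Type*} (f0 f1 : E → E → ℝ≥0) (p π : ℝ) (m : ℕ) (xv : ℕ → E) : ℝ :=
  π * (Lfn f0 f1 0 m m xv : ℝ) +
    (1 - π) * ((∑ i ∈ Finset.Icc 1 m, p ^ (i - 1) * (1 - p) * (Lfn f0 f1 0 m (m - i + 1) xv : ℝ)) +
      p ^ m * (Lfn f0 f1 0 m 0 xv : ℝ))

/-- `G_{l+1}(x_k, …, x_{k+l+1}, α) = α L_{l+1} + (1-α)(∑_{i=0}^{l} p^{l-i} q L_{i+1} + p^{l+1} L₀)`. -/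
def Gfn {E : Type*} (f0 f1 : E → E → ℝ≥0) (p : ℝ) (k l : ℕ) (xv : ℕ → E) (α : ℝ) : ℝ :=
  α * (Lfn f0 f1 k (k + l + 1) (l + 1) xv : ℝ) +
    (1 - α) *
      ((∑ i ∈ Finset.range (l + 1), p ^ (l - i) * (1 - p) * (Lfn f0 f1 k (k + l + 1) (i + 1) xv : ℝ)) +
        p ^ (l + 1) * (Lfn f0 f1 k (k + l + 1) 0 xv : ℝ))

/-- The σ-algebra `𝓕_m` generated by the observations `(X₁, …, X_m)`, `m ≤ n`. -/
def Ffil {E : Type*} [MeasurableSpace E] (n m : ℕ) (h : m ≤ n) :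
    MeasurableSpace (ℕ × (Fin n → E)) :=
  MeasurableSpace.comap (fun ω => fun i : Fin m => ω.2 (Fin.castLE h i)) inferInstance

end

open MeasureTheory

/-!
Given the observations, `ν(θ ≤ k | 𝓕_N)` is the Bayes ratio `∑_{j ≤ k} ρ(j) ℓ^N_j / S_N`, where
`S_N = ∑_j ρ(j) ℓ^N_j` is the marginal density of `(X₁, …, X_N)`. For `N < n` this needs the
consistency of the model: `ℓ^n_j` is `ℓ^N_j` times a product of transition densities along
`x_N, …, x_n`, each integrating to one, so these coordinates integrate out.

With `m = n - l - 1`, every `ℓ^n_j` with `j ≤ m` is `ℓ^m_j · L_{l+1}(x_m, …, x_n)`, while for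
`j > m` the head is `L₀(x₀, …, x_m)` and the tails, weighted by the geometric prior, add up to
`G_{l+1}(x_m, …, x_n, 0)`. Writing `a` and `c` for the head sums of `θ ≤ m` and `θ > m`,
`Π_n = a L_{l+1} / (a L_{l+1} + c G(0))` and `Π_m = a / (a + c)`; since `G` is affine in `α`,
eliminating `a` and `c` gives the formula.
-/

theorem mul_div_mul_add_mul_eq {a c t r : ℝ} (h : a + c = 0 → a = 0) :
    a * t / (a * t + c * r) = a / (a + c) * t / (a / (a + c) * t + (1 - a / (a + c)) * r) := by
  by_cases hac : a + c = 0
  · simp [h hac]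
  · rw [show 1 - a / (a + c) = c / (a + c) by field_simp; ring]
    simp only [div_mul_eq_mul_div]
    rw [← add_div, div_div_div_cancel_right₀ hac]

namespace ChangePoint

section Densities

variable {E : Type*} (f0 f1 : E → E → ℝ≥0)

-- For `t ≤ N - K` the truncated `t + K - N` is `0`: all `f¹` factors lie in the second block.
theorem Lfn_zero_eq_mul {K N : ℕ} (hKN : K ≤ N) (t : ℕ) (xv : ℕ → E) :
    Lfn f0 f1 0 N t xv = Lfn f0 f1 0 K (t + K - N) xv * Lfn f0 f1 K N (min t (N - K)) xv := by
  simp only [Lfn, Icc_add_one_left_eq_Ioc]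
  rcases le_or_gt t (N - K) with ht | ht
  · rw [show t + K - N = 0 by omega, min_eq_left ht, Nat.sub_zero,
      ← prod_Ioc_consecutive _ (Nat.zero_le K) (by omega : K ≤ N - t), Ioc_self, prod_empty]
    ring
  · rw [show K - (t + K - N) = N - t by omega, min_eq_right ht.le, show N - (N - K) = K by omega,
      ← prod_Ioc_consecutive _ (by omega : N - t ≤ K) hKN, Ioc_self, prod_empty]
    ring

theorem ellDens_eq_Lfn (N j : ℕ) (xv : ℕ → E) :
    ellDens f0 f1 N j xv = Lfn f0 f1 0 N (N + 1 - j) xv := by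
  unfold ellDens
  split_ifs with h0 hjN
  · simp only [Lfn, h0, Nat.sub_self, show N - (N + 1 - 0) = 0 by omega]
  · rw [show N - j + 1 = N + 1 - j by omega]
  · rw [show N + 1 - j = 0 by omega]

theorem ellDens_eq_mul {m N : ℕ} (hmN : m ≤ N) (j : ℕ) (xv : ℕ → E) :
    ellDens f0 f1 N j xv =
      ellDens f0 f1 m j xv * Lfn f0 f1 m N (min (N + 1 - j) (N - m)) xv := by
  rw [ellDens_eq_Lfn, ellDens_eq_Lfn, Lfn_zero_eq_mul f0 f1 hmN,
    show N + 1 - j + m - N = m + 1 - j by omega]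

theorem Lfn_eq_prod_ite {k N t : ℕ} (h : k ≤ N - t) (xv : ℕ → E) :
    Lfn f0 f1 k N t xv =
      ∏ r ∈ Icc (k + 1) N, (if N - t < r then f1 else f0) (xv (r - 1)) (xv r) := by
  simp only [Lfn, Icc_add_one_left_eq_Ioc]
  rw [← prod_Ioc_consecutive _ h (Nat.sub_le N t)]
  congr 1 <;> refine prod_congr rfl fun r hr => ?_ <;> rw [mem_Ioc] at hr
  · rw [if_neg (by omega)]
  · rw [if_pos (by omega)]

theorem Lfn_congr {N : ℕ} {xv yv : ℕ → E} (h : ∀ r ≤ N, xv r = yv r) (t : ℕ) :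
    Lfn f0 f1 0 N t xv = Lfn f0 f1 0 N t yv := by
  unfold Lfn
  congr 1 <;> refine prod_congr rfl fun r hr => ?_ <;> rw [mem_Icc] at hr <;>
    rw [h (r - 1) (by omega), h r (by omega)]

theorem extvec_update {n : ℕ} (x : E) (xs : Fin n → E) (i : Fin n) (y : E) (r : ℕ) :
    extvec n x (Function.update xs i y) r = if r = i + 1 then y else extvec n x xs r := by
  unfold extvec
  split_ifs with h1 h2 h2 <;> first | omega | rfl | skip
  · rw [show (⟨r - 1, _⟩ : Fin n) = i from Fin.ext (by simp; omega), Function.update_self]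
  · rw [Function.update_of_ne (fun h => h2 (by rw [← h]; simp; omega))]

theorem extvec_take {m n : ℕ} (hmn : m ≤ n) (x : E) (xs : Fin n → E) {r : ℕ} (hr : r ≤ m) :
    extvec m x (Fin.take m hmn xs) r = extvec n x xs r := by
  unfold extvec
  split_ifs <;> first | omega | rfl

noncomputable def priorWeight (p π : ℝ) (j : ℕ) : ℝ :=
  if j = 0 then π else (1 - π) * p ^ (j - 1) * (1 - p)

theorem prior_eq_ofReal (p π : ℝ) (j : ℕ) : prior p π j = ENNReal.ofReal (priorWeight p π j) := by
  unfold prior priorWeight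
  split_ifs <;> rfl

noncomputable def posteriorNum (p π : ℝ) (k N : ℕ) (xv : ℕ → E) : ℝ :=
  ∑ j ∈ range (k + 1), priorWeight p π j * ellDens f0 f1 N j xv

noncomputable def posterior (p π : ℝ) (k N : ℕ) (xv : ℕ → E) : ℝ :=
  posteriorNum f0 f1 p π k N xv / Sfn f0 f1 p π N xv

theorem Sfn_eq_posteriorNum_add (p π : ℝ) (N : ℕ) (xv : ℕ → E) :
    Sfn f0 f1 p π N xv =
      posteriorNum f0 f1 p π N N xv + (1 - π) * p ^ N * Lfn f0 f1 0 N 0 xv := by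
  rw [Sfn, posteriorNum, sum_range_succ', ← Ico_add_one_right_eq_Icc, sum_Ico_eq_sum_range,
    Nat.add_sub_cancel, mul_add, mul_sum]
  have hterm : ∀ k ∈ range N, (1 - π) * (p ^ (1 + k - 1) * (1 - p) *
      (Lfn f0 f1 0 N (N - (1 + k) + 1) xv : ℝ)) =
        priorWeight p π (k + 1) * ellDens f0 f1 N (k + 1) xv := fun k hk => by
    rw [mem_range] at hk
    rw [ellDens_eq_Lfn, priorWeight, if_neg k.succ_ne_zero,
      show N + 1 - (k + 1) = N - (1 + k) + 1 by omega, show 1 + k - 1 = k by omega,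
      Nat.add_sub_cancel]
    ring
  rw [sum_congr rfl hterm]
  simp only [priorWeight, ellDens, if_true]
  ring

section PriorSums

variable {p π : ℝ}

theorem priorWeight_nonneg (hp : p ∈ Set.Ico (0 : ℝ) 1) (hπ : π ∈ Set.Icc (0 : ℝ) 1) (j : ℕ) :
    0 ≤ priorWeight p π j := by
  unfold priorWeight
  split_ifs
  · exact hπ.1
  · exact mul_nonneg (mul_nonneg (by linarith [hπ.2]) (pow_nonneg hp.1 _)) (by linarith [hp.2])

theorem hasSum_priorWeight_nat_add (hp : p ∈ Set.Ico (0 : ℝ) 1) (N : ℕ) :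
    HasSum (fun j => priorWeight p π (j + (N + 1))) ((1 - π) * p ^ N) := by
  have hq : 1 - p ≠ 0 := by linarith [hp.2]
  have h := (hasSum_geometric_of_lt_one hp.1 hp.2).mul_left ((1 - π) * p ^ N * (1 - p))
  rw [show (1 - π) * p ^ N * (1 - p) * (1 - p)⁻¹ = (1 - π) * p ^ N by field_simp] at h
  have e : ∀ j, priorWeight p π (j + (N + 1)) = (1 - π) * p ^ N * (1 - p) * p ^ j := fun j => by
    simp only [priorWeight, Nat.add_eq_zero_iff, one_ne_zero, and_false, if_false,
      show j + (N + 1) - 1 = N + j by omega, pow_add]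
    ring
  simpa only [e] using h

theorem tsum_prior (hp : p ∈ Set.Ico (0 : ℝ) 1) (hπ : π ∈ Set.Icc (0 : ℝ) 1) :
    ∑' j, prior p π j = 1 := by
  have h : HasSum (priorWeight p π) 1 :=
    (hasSum_nat_add_iff' 1).mp <| by simpa [priorWeight] using hasSum_priorWeight_nat_add hp 0
  simp_rw [prior_eq_ofReal]
  rw [← ENNReal.ofReal_tsum_of_nonneg (priorWeight_nonneg hp hπ) h.summable, h.tsum_eq,
    ENNReal.ofReal_one]

theorem hasSum_priorWeight_mul_ellDens (hp : p ∈ Set.Ico (0 : ℝ) 1) (N : ℕ) (xv : ℕ → E) :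
    HasSum (fun j => priorWeight p π j * ellDens f0 f1 N j xv) (Sfn f0 f1 p π N xv) := by
  refine (hasSum_nat_add_iff' (N + 1)).mp ?_
  rw [Sfn_eq_posteriorNum_add, posteriorNum, add_sub_cancel_left]
  have e : ∀ j, ellDens f0 f1 N (j + (N + 1)) xv = Lfn f0 f1 0 N 0 xv := fun j => by
    rw [ellDens_eq_Lfn, show N + 1 - (j + (N + 1)) = 0 by omega]
  simpa only [e] using (hasSum_priorWeight_nat_add hp N).mul_right (Lfn f0 f1 0 N 0 xv : ℝ)

theorem posteriorNum_nonneg (hp : p ∈ Set.Ico (0 : ℝ) 1) (hπ : π ∈ Set.Icc (0 : ℝ) 1)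
    (k N : ℕ) (xv : ℕ → E) : 0 ≤ posteriorNum f0 f1 p π k N xv :=
  sum_nonneg fun j _ => mul_nonneg (priorWeight_nonneg hp hπ j) (ellDens f0 f1 N j xv).coe_nonneg

theorem posteriorNum_le_Sfn (hp : p ∈ Set.Ico (0 : ℝ) 1) (hπ : π ∈ Set.Icc (0 : ℝ) 1)
    (k N : ℕ) (xv : ℕ → E) : posteriorNum f0 f1 p π k N xv ≤ Sfn f0 f1 p π N xv :=
  sum_le_hasSum _
    (fun j _ => mul_nonneg (priorWeight_nonneg hp hπ j) (ellDens f0 f1 N j xv).coe_nonneg)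
    (hasSum_priorWeight_mul_ellDens f0 f1 hp N xv)

theorem posterior_nonneg (hp : p ∈ Set.Ico (0 : ℝ) 1) (hπ : π ∈ Set.Icc (0 : ℝ) 1)
    (k N : ℕ) (xv : ℕ → E) : 0 ≤ posterior f0 f1 p π k N xv :=
  div_nonneg (posteriorNum_nonneg f0 f1 hp hπ k N xv)
    ((posteriorNum_nonneg f0 f1 hp hπ k N xv).trans (posteriorNum_le_Sfn f0 f1 hp hπ k N xv))

theorem posterior_mul_Sfn (hp : p ∈ Set.Ico (0 : ℝ) 1) (hπ : π ∈ Set.Icc (0 : ℝ) 1)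
    (k N : ℕ) (xv : ℕ → E) :
    posterior f0 f1 p π k N xv * Sfn f0 f1 p π N xv = posteriorNum f0 f1 p π k N xv :=
  div_mul_cancel_of_imp fun h => le_antisymm (h ▸ posteriorNum_le_Sfn f0 f1 hp hπ k N xv)
    (posteriorNum_nonneg f0 f1 hp hπ k N xv)

theorem tsum_prior_mul_ellDens (hp : p ∈ Set.Ico (0 : ℝ) 1) (hπ : π ∈ Set.Icc (0 : ℝ) 1)
    (N : ℕ) (xv : ℕ → E) :
    ∑' j, prior p π j * ellDens f0 f1 N j xv = ENNReal.ofReal (Sfn f0 f1 p π N xv) := by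
  have h := hasSum_priorWeight_mul_ellDens f0 f1 (π := π) hp N xv
  simp_rw [prior_eq_ofReal, ← ENNReal.ofReal_coe_nnreal,
    ← ENNReal.ofReal_mul (priorWeight_nonneg hp hπ _)]
  rw [← ENNReal.ofReal_tsum_of_nonneg
    (fun j => mul_nonneg (priorWeight_nonneg hp hπ j) (ellDens f0 f1 N j xv).coe_nonneg) h.summable,
    h.tsum_eq]

theorem sum_prior_mul_ellDens (hp : p ∈ Set.Ico (0 : ℝ) 1) (hπ : π ∈ Set.Icc (0 : ℝ) 1)
    (k N : ℕ) (xv : ℕ → E) :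
    ∑ j ∈ range (k + 1), prior p π j * ellDens f0 f1 N j xv =
      ENNReal.ofReal (posteriorNum f0 f1 p π k N xv) := by
  simp_rw [posteriorNum, prior_eq_ofReal, ← ENNReal.ofReal_coe_nnreal,
    ← ENNReal.ofReal_mul (priorWeight_nonneg hp hπ _)]
  rw [ENNReal.ofReal_sum_of_nonneg
    fun j _ => mul_nonneg (priorWeight_nonneg hp hπ j) (ellDens f0 f1 N j xv).coe_nonneg]


theorem tsum_prior_mul_ofReal_posterior_mul_ellDens (hp : p ∈ Set.Ico (0 : ℝ) 1)
    (hπ : π ∈ Set.Icc (0 : ℝ) 1) (k N : ℕ) (xv : ℕ → E) :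
    ∑' j, prior p π j * ENNReal.ofReal (posterior f0 f1 p π k N xv) * ellDens f0 f1 N j xv =
      ∑' j, if j ≤ k then prior p π j * ellDens f0 f1 N j xv else 0 := by
  calc ∑' j, prior p π j * ENNReal.ofReal (posterior f0 f1 p π k N xv) * ellDens f0 f1 N j xv
      = ENNReal.ofReal (posterior f0 f1 p π k N xv) *
          ∑' j, prior p π j * ellDens f0 f1 N j xv := by
        rw [← ENNReal.tsum_mul_left]
        exact tsum_congr fun j => by ring
    _ = ∑ j ∈ range (k + 1), prior p π j * ellDens f0 f1 N j xv := by
        rw [tsum_prior_mul_ellDens f0 f1 hp hπ,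
          ← ENNReal.ofReal_mul (posterior_nonneg f0 f1 hp hπ _ _ _),
          posterior_mul_Sfn f0 f1 hp hπ, sum_prior_mul_ellDens f0 f1 hp hπ]
    _ = _ := by
        rw [tsum_eq_sum (s := range (k + 1)) fun j hj => if_neg (by simpa using hj)]
        exact sum_congr rfl fun j hj => (if_pos (by simpa [Nat.lt_succ_iff] using hj)).symm

end PriorSums

theorem posteriorNum_eq_mul (p π : ℝ) {k m N : ℕ} (hkm : k ≤ m) (hmN : m ≤ N) (xv : ℕ → E) :
    posteriorNum f0 f1 p π k N xv = posteriorNum f0 f1 p π k m xv * Lfn f0 f1 m N (N - m) xv := by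
  rw [posteriorNum, posteriorNum, sum_mul]
  refine sum_congr rfl fun j hj => ?_
  rw [mem_range] at hj
  rw [ellDens_eq_mul f0 f1 hmN, min_eq_right (by omega), NNReal.coe_mul, mul_assoc]

theorem Sfn_eq_mul_add_mul_Gfn (p π : ℝ) (m l : ℕ) (xv : ℕ → E) :
    Sfn f0 f1 p π (m + l + 1) xv =
      posteriorNum f0 f1 p π m m xv * Lfn f0 f1 m (m + l + 1) (l + 1) xv +
        (1 - π) * p ^ m * Lfn f0 f1 0 m 0 xv * Gfn f0 f1 p m l xv 0 := by
  have hmn : m ≤ m + l + 1 := by omega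
  have hhead := posteriorNum_eq_mul f0 f1 p π le_rfl hmn xv
  rw [show m + l + 1 - m = l + 1 by omega] at hhead
  have htail : ∀ i ∈ range (l + 1),
      priorWeight p π (m + 1 + i) * ellDens f0 f1 (m + l + 1) (m + 1 + i) xv =
        (1 - π) * p ^ m * Lfn f0 f1 0 m 0 xv *
          (p ^ (l - (l - i)) * (1 - p) * Lfn f0 f1 m (m + l + 1) (l - i + 1) xv) := by
    intro i hi
    rw [mem_range] at hi
    rw [ellDens_eq_mul f0 f1 hmn, ellDens_eq_Lfn, priorWeight, if_neg (by omega),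
      show m + 1 - (m + 1 + i) = 0 by omega, show m + 1 + i - 1 = m + i by omega,
      show l - (l - i) = i by omega, min_eq_left (by omega),
      show m + l + 1 + 1 - (m + 1 + i) = l - i + 1 by omega, NNReal.coe_mul, pow_add]
    ring
  have hL0 : Lfn f0 f1 0 (m + l + 1) 0 xv = Lfn f0 f1 0 m 0 xv * Lfn f0 f1 m (m + l + 1) 0 xv := by
    rw [Lfn_zero_eq_mul f0 f1 hmn, show 0 + m - (m + l + 1) = 0 by omega, Nat.zero_min]
  rw [Sfn_eq_posteriorNum_add, posteriorNum, show m + l + 1 + 1 = m + 1 + (l + 1) by omega,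
    sum_range_add, sum_congr rfl htail, ← mul_sum, Gfn,
    ← sum_range_reflect (fun i => p ^ (l - i) * (1 - p) * (Lfn f0 f1 m (m + l + 1) (i + 1) xv : ℝ)),
    hL0, NNReal.coe_mul, ← posteriorNum, hhead, pow_add, pow_add]
  simp only [add_tsub_cancel_right]
  ring

theorem posterior_eq_div_Gfn {p π : ℝ} (hp : p ∈ Set.Ico (0 : ℝ) 1) (hπ : π ∈ Set.Icc (0 : ℝ) 1)
    {m l n : ℕ} (hn : m + l + 1 = n) (xv : ℕ → E) :
    posterior f0 f1 p π m n xv =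
      posterior f0 f1 p π m m xv * Lfn f0 f1 m n (l + 1) xv /
        Gfn f0 f1 p m l xv (posterior f0 f1 p π m m xv) := by
  subst hn
  have hG : ∀ α, Gfn f0 f1 p m l xv α =
      α * Lfn f0 f1 m (m + l + 1) (l + 1) xv + (1 - α) * Gfn f0 f1 p m l xv 0 := fun α => by
    simp only [Gfn]
    ring
  have hc : 0 ≤ (1 - π) * p ^ m * Lfn f0 f1 0 m 0 xv :=
    mul_nonneg (mul_nonneg (sub_nonneg.2 hπ.2) (pow_nonneg hp.1 m)) (Lfn f0 f1 0 m 0 xv).coe_nonneg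
  rw [hG, posterior, posterior, Sfn_eq_mul_add_mul_Gfn, Sfn_eq_posteriorNum_add,
    posteriorNum_eq_mul f0 f1 p π le_rfl (by omega : m ≤ m + l + 1),
    show m + l + 1 - m = l + 1 by omega]
  exact mul_div_mul_add_mul_eq fun h =>
    le_antisymm (h ▸ le_add_of_nonneg_right hc) (posteriorNum_nonneg f0 f1 hp hπ m m xv)

theorem posterior_extvec_take (p π : ℝ) (k : ℕ) {m n : ℕ} (hmn : m ≤ n) (x : E)
    (xs : Fin n → E) :
    posterior f0 f1 p π k m (extvec n x xs) =
      posterior f0 f1 p π k m (extvec m x (Fin.take m hmn xs)) := by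
  simp only [posterior, posteriorNum, Sfn, ellDens_eq_Lfn,
    Lfn_congr f0 f1 fun r hr => (extvec_take hmn x xs hr).symm]

end Densities

section Integration

variable {E : Type*} [MeasurableSpace E]

theorem measurable_extvec (n : ℕ) (x : E) (r : ℕ) :
    Measurable fun xs : Fin n → E => extvec n x xs r := by
  unfold extvec
  split_ifs
  · exact measurable_pi_apply _
  · exact measurable_const

variable {f0 f1 : E → E → ℝ≥0}

theorem measurable_Lfn (hf0 : Measurable (Function.uncurry f0))
    (hf1 : Measurable (Function.uncurry f1)) {α : Type*} [MeasurableSpace α] {xv : α → ℕ → E}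
    (hxv : ∀ r, Measurable fun a => xv a r) (k N t : ℕ) :
    Measurable fun a => Lfn f0 f1 k N t (xv a) := by
  unfold Lfn
  exact (Finset.measurable_prod _ fun r _ => hf0.comp ((hxv _).prodMk (hxv r))).mul
    (Finset.measurable_prod _ fun r _ => hf1.comp ((hxv _).prodMk (hxv r)))

theorem measurable_ellDens (hf0 : Measurable (Function.uncurry f0))
    (hf1 : Measurable (Function.uncurry f1)) {α : Type*} [MeasurableSpace α] {xv : α → ℕ → E}
    (hxv : ∀ r, Measurable fun a => xv a r) (N j : ℕ) :
    Measurable fun a => ellDens f0 f1 N j (xv a) := by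
  simp only [ellDens_eq_Lfn]
  exact measurable_Lfn hf0 hf1 hxv 0 N _

theorem measurable_posterior (hf0 : Measurable (Function.uncurry f0))
    (hf1 : Measurable (Function.uncurry f1)) (p π : ℝ) {α : Type*} [MeasurableSpace α]
    {xv : α → ℕ → E} (hxv : ∀ r, Measurable fun a => xv a r) (k N : ℕ) :
    Measurable fun a => posterior f0 f1 p π k N (xv a) := by
  have hL := fun k N t => (measurable_Lfn hf0 hf1 hxv k N t).coe_nnreal_real
  simp only [posterior, posteriorNum, Sfn, ellDens_eq_Lfn]
  measurability

variable {μ : Measure E} (hf0 : Measurable (Function.uncurry f0))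
  (hf1 : Measurable (Function.uncurry f1))

include hf0 hf1 in
theorem lintegral_nuMeasure (p π : ℝ) (x : E) (n : ℕ) (g : ℕ × (Fin n → E) → ℝ≥0∞) :
    ∫⁻ ω, g ω ∂nuMeasure μ f0 f1 p π x n =
      ∑' j, prior p π j *
        ∫⁻ xs, g (j, xs) * ellDens f0 f1 n j (extvec n x xs) ∂(Measure.pi fun _ => μ) := by
  simp only [nuMeasure, lintegral_sum_measure, lintegral_smul_measure, smul_eq_mul]
  refine tsum_congr fun j => ?_
  rw [(measurableEmbedding_prodMk_left j).lintegral_map,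
    lintegral_withDensity_eq_lintegral_mul_non_measurable _
      (measurable_ellDens hf0 hf1 (measurable_extvec n x) n j).coe_nnreal_ennreal
      (ae_of_all _ fun _ => ENNReal.coe_lt_top)]
  simp only [Pi.mul_apply, mul_comm]

theorem lintegral_update_mul_prod_transition {m k n : ℕ} (hmk : m ≤ k) (hk : k < n) (x : E)
    {K : ℕ → E → E → ℝ≥0∞} (hK : ∀ r, Measurable (Function.uncurry (K r)))
    (hK1 : ∀ r z, ∫⁻ y, K r z y ∂μ = 1) {h : (Fin n → E) → ℝ≥0∞}
    (hdep : DependsOn h {i | (i : ℕ) < m}) (xs : Fin n → E) :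
    ∫⁻ y, h (Function.update xs ⟨k, hk⟩ y) * ∏ r ∈ Icc (m + 1) (k + 1),
        K r (extvec n x (Function.update xs ⟨k, hk⟩ y) (r - 1))
          (extvec n x (Function.update xs ⟨k, hk⟩ y) r) ∂μ =
      h xs * ∏ r ∈ Icc (m + 1) k, K r (extvec n x xs (r - 1)) (extvec n x xs r) := by
  have hupd : ∀ y, h (Function.update xs ⟨k, hk⟩ y) * ∏ r ∈ Icc (m + 1) (k + 1),
      K r (extvec n x (Function.update xs ⟨k, hk⟩ y) (r - 1))
        (extvec n x (Function.update xs ⟨k, hk⟩ y) r) =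
      (h xs * ∏ r ∈ Icc (m + 1) k, K r (extvec n x xs (r - 1)) (extvec n x xs r)) *
        K (k + 1) (extvec n x xs k) y := by
    intro y
    simp only [prod_Icc_succ_top (by omega : m + 1 ≤ k + 1), extvec_update, Nat.add_sub_cancel,
      if_neg (by omega : k ≠ k + 1), if_true]
    rw [hdep fun i hi => Function.update_of_ne (fun he => by simp [he] at hi; omega) y xs,
      mul_assoc]
    congr 2
    refine prod_congr rfl fun r hr => ?_
    rw [mem_Icc] at hr
    rw [if_neg (by omega), if_neg (by omega)]
  simp only [hupd]
  rw [lintegral_const_mul _ (hK _).of_uncurry_left, hK1, mul_one]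

variable [SigmaFinite μ]

theorem lmarginal_mul_prod_transition {m n : ℕ} (hmn : m ≤ n) (x : E)
    {K : ℕ → E → E → ℝ≥0∞} (hK : ∀ r, Measurable (Function.uncurry (K r)))
    (hK1 : ∀ r z, ∫⁻ y, K r z y ∂μ = 1) {h : (Fin n → E) → ℝ≥0∞} (hh : Measurable h)
    (hdep : DependsOn h {i | (i : ℕ) < m}) :
    (∫⋯∫⁻_(univ.filter fun i : Fin n => m ≤ (i : ℕ)),
        (fun xs => h xs * ∏ r ∈ Icc (m + 1) n, K r (extvec n x xs (r - 1)) (extvec n x xs r))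
        ∂fun _ => μ) = h := by
  set P : ℕ → (Fin n → E) → ℝ≥0∞ := fun k xs =>
    h xs * ∏ r ∈ Icc (m + 1) k, K r (extvec n x xs (r - 1)) (extvec n x xs r)
  have hP : Measurable (P n) := hh.mul <| Finset.measurable_prod _ fun r _ =>
    (hK r).comp ((measurable_extvec n x _).prodMk (measurable_extvec n x r))
  suffices ∀ k ≤ n, m ≤ k →
      (∫⋯∫⁻_(univ.filter fun i : Fin n => k ≤ (i : ℕ)), P n ∂fun _ => μ) = P k by
    simpa [P] using this m hmn le_rfl
  intro k hkn
  refine Nat.decreasingInduction (motive := fun k _ => m ≤ k →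
    (∫⋯∫⁻_(univ.filter fun i : Fin n => k ≤ (i : ℕ)), P n ∂fun _ => μ) = P k) ?_ ?_ hkn
  · intro k hk ih hmk
    have hins : univ.filter (fun i : Fin n => k ≤ (i : ℕ)) =
        insert ⟨k, hk⟩ (univ.filter fun i : Fin n => k + 1 ≤ (i : ℕ)) := by
      ext i
      simp [Fin.ext_iff]
      omega
    funext xs
    rw [hins, lmarginal_insert _ hP (by simp), ih (by omega)]
    exact lintegral_update_mul_prod_transition hmk hk x hK hK1 hdep xs
  · intro _
    rw [filter_false_of_mem fun i _ => by omega, lmarginal_empty]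

variable (hi0 : ∀ z, ∫⁻ y, (f0 z y : ℝ≥0∞) ∂μ = 1) (hi1 : ∀ z, ∫⁻ y, (f1 z y : ℝ≥0∞) ∂μ = 1)

include hf0 hf1 hi0 hi1 in
theorem lmarginal_mul_Lfn {m n : ℕ} (hmn : m ≤ n) (x : E) {t : ℕ} (ht : m ≤ n - t)
    {h : (Fin n → E) → ℝ≥0∞} (hh : Measurable h) (hdep : DependsOn h {i | (i : ℕ) < m}) :
    (∫⋯∫⁻_(univ.filter fun i : Fin n => m ≤ (i : ℕ)),
        (fun xs => h xs * Lfn f0 f1 m n t (extvec n x xs)) ∂fun _ => μ) = h := by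
  simp_rw [Lfn_eq_prod_ite f0 f1 ht, ENNReal.ofNNReal_finsetProd]
  refine lmarginal_mul_prod_transition (μ := μ)
    (K := fun r z y => ((if n - t < r then f1 else f0) z y : ℝ≥0∞)) hmn x (fun r => ?_)
    (fun r z => ?_) hh hdep
  · split_ifs
    exacts [hf1.coe_nnreal_ennreal, hf0.coe_nnreal_ennreal]
  · split_ifs
    exacts [hi1 z, hi0 z]

include hf0 hf1 hi0 hi1 in
theorem lintegral_ellDens (n j : ℕ) (x : E) :
    ∫⁻ xs, (ellDens f0 f1 n j (extvec n x xs) : ℝ≥0∞) ∂(Measure.pi fun _ => μ) = 1 := by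
  have h := lmarginal_mul_Lfn hf0 hf1 hi0 hi1 (μ := μ) (Nat.zero_le n) x
    (Nat.zero_le (n - (n + 1 - j))) measurable_const ((dependsOn_const 1).mono (Set.empty_subset _))
  simp only [zero_le, filter_true, one_mul] at h
  simpa [ellDens_eq_Lfn, ← lintegral_eq_lmarginal_univ] using congrFun h fun _ => x

include hf0 hf1 hi0 hi1 in
theorem lintegral_comp_take_mul_Lfn {m n : ℕ} (hmn : m ≤ n) (x : E)
    {Φ : (Fin m → E) → ℝ≥0∞} (hΦ : Measurable Φ) {t : ℕ} (ht : m ≤ n - t) :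
    ∫⁻ xs, Φ (Fin.take m hmn xs) * Lfn f0 f1 m n t (extvec n x xs) ∂(Measure.pi fun _ => μ) =
      ∫⁻ xs, Φ (Fin.take m hmn xs) * Lfn f0 f1 m n 0 (extvec n x xs) ∂(Measure.pi fun _ => μ) := by
  have hdep : DependsOn (fun xs : Fin n → E => Φ (Fin.take m hmn xs)) {i | (i : ℕ) < m} :=
    fun xs ys h => congrArg Φ (funext fun i => h _ (by simp))
  have hmeas : Measurable fun xs : Fin n → E => Φ (Fin.take m hmn xs) :=
    hΦ.comp (measurable_pi_lambda _ fun i => measurable_pi_apply _)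
  have hL := fun t => (measurable_Lfn hf0 hf1 (measurable_extvec n x) m n t).coe_nnreal_ennreal
  refine lintegral_eq_of_lmarginal_eq (univ.filter fun i : Fin n => m ≤ (i : ℕ))
    (hmeas.mul (hL t)) (hmeas.mul (hL 0)) ?_
  rw [lmarginal_mul_Lfn hf0 hf1 hi0 hi1 hmn x ht hmeas hdep,
    lmarginal_mul_Lfn hf0 hf1 hi0 hi1 hmn x (by omega) hmeas hdep]

include hf0 hf1 hi0 hi1 in
theorem isProbabilityMeasure_nuMeasure {p π : ℝ} (hp : p ∈ Set.Ico (0 : ℝ) 1)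
    (hπ : π ∈ Set.Icc (0 : ℝ) 1) (x : E) (n : ℕ) :
    IsProbabilityMeasure (nuMeasure μ f0 f1 p π x n) := by
  constructor
  rw [← setLIntegral_one, Measure.restrict_univ, lintegral_nuMeasure hf0 hf1]
  simp only [one_mul, lintegral_ellDens hf0 hf1 hi0 hi1, mul_one]
  exact tsum_prior hp hπ

-- `Lfn f0 f1 m n 0` is a probability density in `x_{m+1}, …, x_n`: it stands for the
-- observations after time `m`, which have been integrated out.
include hf0 hf1 hi0 hi1 in
theorem lintegral_nuMeasure_comp_take (p π : ℝ) (x : E) {m n : ℕ} (hmn : m ≤ n)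
    {G : ℕ → (Fin m → E) → ℝ≥0∞} (hG : ∀ j, Measurable (G j)) :
    ∫⁻ ω, G ω.1 (Fin.take m hmn ω.2) ∂nuMeasure μ f0 f1 p π x n =
      ∫⁻ xs, (∑' j, prior p π j * G j (Fin.take m hmn xs) *
          ellDens f0 f1 m j (extvec m x (Fin.take m hmn xs))) *
        Lfn f0 f1 m n 0 (extvec n x xs) ∂(Measure.pi fun _ => μ) := by
  have hℓ : ∀ j, Measurable fun v : Fin m → E => (ellDens f0 f1 m j (extvec m x v) : ℝ≥0∞) :=
    fun j => (measurable_ellDens hf0 hf1 (measurable_extvec m x) m j).coe_nnreal_ennreal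
  have htake : Measurable (Fin.take m hmn : (Fin n → E) → Fin m → E) :=
    measurable_pi_lambda _ fun i => measurable_pi_apply _
  have hT := (measurable_Lfn hf0 hf1 (measurable_extvec n x) m n 0).coe_nnreal_ennreal
  simp_rw [← ENNReal.tsum_mul_right]
  have hmeas : ∀ j, Measurable fun xs => prior p π j * G j (Fin.take m hmn xs) *
      ellDens f0 f1 m j (extvec m x (Fin.take m hmn xs)) * Lfn f0 f1 m n 0 (extvec n x xs) :=
    fun j => ((((hG j).comp htake).const_mul _).mul ((hℓ j).comp htake)).mul hT
  rw [lintegral_nuMeasure hf0 hf1, lintegral_tsum fun j => (hmeas j).aemeasurable]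
  refine tsum_congr fun j => ?_
  have hsplit : ∀ xs : Fin n → E, (ellDens f0 f1 n j (extvec n x xs) : ℝ≥0∞) =
      ellDens f0 f1 m j (extvec m x (Fin.take m hmn xs)) *
        Lfn f0 f1 m n (min (n + 1 - j) (n - m)) (extvec n x xs) := fun xs => by
    rw [ellDens_eq_mul f0 f1 hmn, ellDens_eq_Lfn, ellDens_eq_Lfn,
      Lfn_congr f0 f1 (fun r hr => (extvec_take hmn x xs hr).symm), ENNReal.coe_mul]
  simp_rw [hsplit, ← mul_assoc]
  rw [lintegral_comp_take_mul_Lfn hf0 hf1 hi0 hi1 hmn x (Φ := fun v => G j v * _)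
      ((hG j).mul (hℓ j)) (by omega),
    ← lintegral_const_mul' _ _ (by rw [prior_eq_ofReal]; exact ENNReal.ofReal_ne_top)]
  simp only [mul_assoc]

end Integration

theorem toReal_ae_eq_condExp_indicator {Ω : Type*} {m mΩ : MeasurableSpace Ω} (hm : m ≤ mΩ)
    {ν : Measure Ω} [IsFiniteMeasure ν] {S : Set Ω} (hS : MeasurableSet S) {g : Ω → ℝ≥0∞}
    (hg : Measurable[m] g) (hgS : ∀ s, MeasurableSet[m] s → ∫⁻ ω in s, g ω ∂ν = ν (S ∩ s)) :
    (fun ω => (g ω).toReal) =ᵐ[ν] ν[S.indicator fun _ => (1 : ℝ) | m] := by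
  have hg' : Measurable g := hg.mono hm le_rfl
  have hfin : ∀ s, MeasurableSet[m] s → ∫⁻ ω in s, g ω ∂ν ≠ ∞ := fun s hs =>
    hgS s hs ▸ measure_ne_top ν _
  refine ae_eq_condExp_of_forall_setIntegral_eq hm ((integrable_const 1).indicator hS)
    (fun s hs _ => integrable_toReal_of_lintegral_ne_top hg'.aemeasurable (hfin s hs))
    (fun s hs _ => ?_) hg.ennreal_toReal.aestronglyMeasurable
  rw [integral_toReal hg'.aemeasurable (ae_lt_top hg' (hfin s hs)), hgS s hs,
    integral_indicator_const _ hS, measureReal_def, Measure.restrict_apply hS, smul_eq_mul, mul_one]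

section Posterior

variable {E : Type*} [MeasurableSpace E] {μ : Measure E} [SigmaFinite μ] {f0 f1 : E → E → ℝ≥0}
  {p π : ℝ} (hf0 : Measurable (Function.uncurry f0)) (hf1 : Measurable (Function.uncurry f1))
  (hi0 : ∀ z, ∫⁻ y, (f0 z y : ℝ≥0∞) ∂μ = 1) (hi1 : ∀ z, ∫⁻ y, (f1 z y : ℝ≥0∞) ∂μ = 1)
  (hp : p ∈ Set.Ico (0 : ℝ) 1) (hπ : π ∈ Set.Icc (0 : ℝ) 1)
include hf0 hf1 hi0 hi1 hp hπ

theorem setLIntegral_posterior (x : E) {m n : ℕ} (hmn : m ≤ n) (k : ℕ) {t : Set (Fin m → E)}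
    (ht : MeasurableSet t) :
    ∫⁻ ω in (fun ω : ℕ × (Fin n → E) => Fin.take m hmn ω.2) ⁻¹' t,
        ENNReal.ofReal (posterior f0 f1 p π k m (extvec m x (Fin.take m hmn ω.2)))
        ∂nuMeasure μ f0 f1 p π x n =
      nuMeasure μ f0 f1 p π x n ({ω | ω.1 ≤ k} ∩
        (fun ω : ℕ × (Fin n → E) => Fin.take m hmn ω.2) ⁻¹' t) := by
  set P : (Fin m → E) → ℝ := fun v => posterior f0 f1 p π k m (extvec m x v)
  have hP : Measurable P := measurable_posterior hf0 hf1 p π (measurable_extvec m x) k m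
  have htake : Measurable fun ω : ℕ × (Fin n → E) => Fin.take m hmn ω.2 :=
    measurable_pi_lambda _ fun i => (measurable_pi_apply _).comp measurable_snd
  have hS : MeasurableSet {ω : ℕ × (Fin n → E) | ω.1 ≤ k} :=
    measurable_fst (MeasurableSet.of_discrete : MeasurableSet {j : ℕ | j ≤ k})
  have hind : ((fun ω : ℕ × (Fin n → E) => Fin.take m hmn ω.2) ⁻¹' t).indicator
      (fun ω => ENNReal.ofReal (P (Fin.take m hmn ω.2))) =
        fun ω => (fun _ : ℕ => t.indicator fun v => ENNReal.ofReal (P v)) ω.1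
          (Fin.take m hmn ω.2) := by
    funext ω
    by_cases hv : Fin.take m hmn ω.2 ∈ t <;> simp [Set.indicator, hv]
  have hind' : ({ω : ℕ × (Fin n → E) | ω.1 ≤ k} ∩
      (fun ω : ℕ × (Fin n → E) => Fin.take m hmn ω.2) ⁻¹' t).indicator (fun _ => (1 : ℝ≥0∞)) =
        fun ω => (fun j v => if j ≤ k then t.indicator 1 v else 0) ω.1 (Fin.take m hmn ω.2) := by
    funext ω
    by_cases hj : ω.1 ≤ k <;> by_cases hv : Fin.take m hmn ω.2 ∈ t <;>
      simp [Set.indicator, hj, hv]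
  rw [← lintegral_indicator (htake ht), ← one_mul (nuMeasure μ f0 f1 p π x n _),
    ← lintegral_indicator_const (hS.inter (htake ht)), hind, hind',
    lintegral_nuMeasure_comp_take hf0 hf1 hi0 hi1 p π x hmn
      fun _ => hP.ennreal_ofReal.indicator ht,
    lintegral_nuMeasure_comp_take hf0 hf1 hi0 hi1 p π x hmn
      (G := fun j v => if j ≤ k then t.indicator 1 v else 0) fun j => by
      split_ifs <;> [exact measurable_one.indicator ht; exact measurable_const]]
  refine lintegral_congr fun xs => congrArg (· * _) ?_
  by_cases hv : Fin.take m hmn xs ∈ t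
  · simp only [Set.indicator_of_mem hv, Pi.one_apply, mul_ite, mul_one, mul_zero, ite_mul,
      zero_mul]
    exact tsum_prior_mul_ofReal_posterior_mul_ellDens f0 f1 hp hπ k m _
  · simp [Set.indicator_of_notMem hv]

theorem posterior_ae_eq_condExp (x : E) {m n : ℕ} (hmn : m ≤ n) (k : ℕ) :
    (fun ω : ℕ × (Fin n → E) => posterior f0 f1 p π k m (extvec n x ω.2))
      =ᵐ[nuMeasure μ f0 f1 p π x n] (nuMeasure μ f0 f1 p π x n)[
        Set.indicator {ω : ℕ × (Fin n → E) | ω.1 ≤ k} (fun _ => (1 : ℝ)) | Ffil n m hmn] := by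
  have := isProbabilityMeasure_nuMeasure hf0 hf1 hi0 hi1 hp hπ x n
  have htake : Measurable[Ffil (E := E) n m hmn] fun ω : ℕ × (Fin n → E) => Fin.take m hmn ω.2 :=
    comap_measurable _
  have hFle : Ffil n m hmn ≤ (inferInstance : MeasurableSpace (ℕ × (Fin n → E))) :=
    (measurable_pi_lambda _ fun i => (measurable_pi_apply _).comp measurable_snd).comap_le
  refine (Filter.EventuallyEq.of_eq (funext fun ω => ?_)).trans
    (toReal_ae_eq_condExp_indicator hFle
      (measurable_fst (MeasurableSet.of_discrete : MeasurableSet {j : ℕ | j ≤ k}))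
      ((measurable_posterior hf0 hf1 p π (measurable_extvec m x) k m).ennreal_ofReal.comp htake)
      ?_)
  · rw [Function.comp_apply, ENNReal.toReal_ofReal (posterior_nonneg f0 f1 hp hπ _ _ _),
      posterior_extvec_take f0 f1 p π k hmn]
  · rintro _ ⟨t, ht, rfl⟩
    exact setLIntegral_posterior hf0 hf1 hi0 hi1 hp hπ x hmn k ht

end Posterior

end ChangePoint

/-- For `0 ≤ l < n`, `ν`-a.e.
`ν(θ ≤ n-l-1 | 𝓕_n) = Π_{n-l-1} · L_{l+1}(X_{n-l-1},…,X_n) / G_{l+1}(X_{n-l-1},…,X_n, Π_{n-l-1})`,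
where `Π_m = ν(θ ≤ m | 𝓕_m)`. -/
theorem stmt8 {E : Type*} [MeasurableSpace E] (μ : Measure E) [SigmaFinite μ]
    (f0 f1 : E → E → ℝ≥0) (hf0 : Measurable (Function.uncurry f0))
    (hf1 : Measurable (Function.uncurry f1))
    (hi0 : ∀ z, ∫⁻ y, (f0 z y : ℝ≥0∞) ∂μ = 1) (hi1 : ∀ z, ∫⁻ y, (f1 z y : ℝ≥0∞) ∂μ = 1)
    (p π : ℝ) (hp : p ∈ Set.Ioo (0 : ℝ) 1) (hπ : π ∈ Set.Ioo (0 : ℝ) 1)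
    (x : E) (n l : ℕ) (hl : l < n) :
    ∀ᵐ ω ∂(nuMeasure μ f0 f1 p π x n),
      ((nuMeasure μ f0 f1 p π x n)[Set.indicator {ω' : ℕ × (Fin n → E) | ω'.1 ≤ n - l - 1}
          (fun _ => (1 : ℝ)) | Ffil n n le_rfl]) ω =
        ((nuMeasure μ f0 f1 p π x n)[Set.indicator {ω' : ℕ × (Fin n → E) | ω'.1 ≤ n - l - 1}
            (fun _ => (1 : ℝ)) | Ffil n (n - l - 1) (by omega)]) ω *
          (Lfn f0 f1 (n - l - 1) n (l + 1) (extvec n x ω.2) : ℝ) /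
          Gfn f0 f1 p (n - l - 1) l (extvec n x ω.2)
            (((nuMeasure μ f0 f1 p π x n)[Set.indicator {ω' : ℕ × (Fin n → E) | ω'.1 ≤ n - l - 1}
              (fun _ => (1 : ℝ)) | Ffil n (n - l - 1) (by omega)]) ω) := by
  have hp' : p ∈ Set.Ico (0 : ℝ) 1 := Set.Ioo_subset_Ico_self hp
  have hπ' : π ∈ Set.Icc (0 : ℝ) 1 := Set.Ioo_subset_Icc_self hπ
  have hm : n - l - 1 ≤ n := by omega
  filter_upwards [ChangePoint.posterior_ae_eq_condExp hf0 hf1 hi0 hi1 hp' hπ' x le_rfl (n - l - 1),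
    ChangePoint.posterior_ae_eq_condExp hf0 hf1 hi0 hi1 hp' hπ' x hm (n - l - 1)] with ω hN hM
  rw [← hN, ← hM]
  exact ChangePoint.posterior_eq_div_Gfn f0 f1 hp' hπ' (by omega) _
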